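/- (Lemma 3: polynomial concentration of the collected reward.) Suppose the UCB policy is run with a parameter α satisfying ξη(1−η) ≤ α < ξ(1−η) and α > 2. Let A(n) = ⌈(2 β^{1/ξ} / Δ_min)^{1/(1−η)} · n^{α/(ξ(1−η))}⌉ and N_p = min{ t ≥ 1 : t ≥ A(t) }. Then for every integer n ≥ N_p and every real x ≥ 1, setting r_0 = n^η + 2R(K−1)(3 + A(n)), both tails satisfy: P( n X̄_n − n μ* ≥ r_0 x ) ≤ β/x^ξ + 2(K−1) / ( (α−1) ((1 + A(n)) x)^{α−1} ), and P( n X̄_n − n μ* ≤ −r_0 x ) ≤ β/x^ξ + 2(K−1) / ( (α−1) ((1 + A(n)) x)^{α−1} ). -/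

import Mathlib

open MeasureTheory ProbabilityTheory Finset

noncomputable section

/-- Empirical average `X̄_{i,n} = (1/n) ∑_{t=1}^n X_{i,t}` of the first `n` rewards of arm `i`. -/
def empAvg {Ω : Type*} {K : ℕ} (X : Fin K → ℕ → Ω → ℝ) (i : Fin K) (n : ℕ) (ω : Ω) : ℝ :=
  (∑ t ∈ Finset.Icc 1 n, X i t ω) / n

/-- Bonus term `B_{t,s} = β^{1/ξ} t^{α/ξ} / s^{1-η}`. -/
def bonus (β ξ α η : ℝ) (t s : ℕ) : ℝ :=
  β ^ (1 / ξ) * (t : ℝ) ^ (α / ξ) / (s : ℝ) ^ (1 - η)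

/-- Upper confidence index `U_{i,s,t} = X̄_{i,s} + B_{t,s}`. -/
def ucbIdx {Ω : Type*} {K : ℕ} (X : Fin K → ℕ → Ω → ℝ) (β ξ α η : ℝ)
    (i : Fin K) (s t : ℕ) (ω : Ω) : ℝ :=
  empAvg X i s ω + bonus β ξ α η t s

/-- `T_i(t) = ∑_{l=1}^t 1{I_l = i}`, the number of plays of arm `i` up to (and including)
time `t`. -/
def playCount {Ω : Type*} {K : ℕ} (I : ℕ → Ω → Fin K) (i : Fin K) (t : ℕ) (ω : Ω) : ℕ :=
  ((Finset.Icc 1 t).filter fun l => I l ω = i).card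

/-- The `EReal`-valued index `X̄_{i,T_i(t)} + B_{t,T_i(t)}` used by the UCB policy at the end
of time `t`, with the convention that the index is `+∞` when `T_i(t) = 0`
(i.e. `B_{t,0} = +∞`). -/
def ucbIdxE {Ω : Type*} {K : ℕ} (X : Fin K → ℕ → Ω → ℝ) (β ξ α η : ℝ)
    (I : ℕ → Ω → Fin K) (j : Fin K) (t : ℕ) (ω : Ω) : EReal :=
  if playCount I j t ω = 0 then ⊤
  else ((ucbIdx X β ξ α η j (playCount I j t ω) t ω : ℝ) : EReal)

/-- Empirical average `X̄_n = (1/n) ∑_{i=1}^K T_i(n) X̄_{i,T_i(n)}` of all rewards collected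
in the first `n` plays. -/
def rewardAvg {Ω : Type*} {K : ℕ} (X : Fin K → ℕ → Ω → ℝ) (I : ℕ → Ω → Fin K)
    (n : ℕ) (ω : Ω) : ℝ :=
  (∑ i : Fin K, (playCount I i n ω : ℝ) * empAvg X i (playCount I i n ω) ω) / n


/-! On the event that every suboptimal arm has been played at most `s₀ = ⌈(1 + A(n)) x⌉ + 1`
times, the collected reward `n X̄_n` differs from the sum of the first `n` rewards of the optimal
arm by at most `2R(K-1)s₀`, so the concentration of the optimal arm gives the term `β / x^ξ`.

A suboptimal arm `i` is played for the `(s₀+1)`-th time only when its index beats that of `i*`.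
As `s₀ ≥ A(n)` forces `2 B_{n,s₀} ≤ Δ_min`, at that moment either the empirical mean of arm `i`
exceeded `μ_i` by `B_{s₀,s₀}`, or for some `s ≥ 1` the empirical mean of `i*` after `s` plays fell
below `μ*` by `B_{s₀+s,s}`. The bonus is calibrated so that the deviation at time `t` has probability
at most `t^(-α)`, and comparing `∑_{t ≥ s₀} t^(-α)` with an integral bounds the probability of the
`(s₀+1)`-th play by `⌈(1 + A(n)) x⌉^(1-α) / (α-1)`. -/

section PlayCount

variable {Ω : Type*} {K : ℕ} (I : ℕ → Ω → Fin K) (i : Fin K) (ω : Ω)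

lemma playCount_succ (t : ℕ) :
    playCount I i (t + 1) ω = playCount I i t ω + if I (t + 1) ω = i then 1 else 0 := by
  rw [playCount, playCount, ← insert_Icc_right_eq_Icc_add_one (Nat.le_add_left 1 t),
    filter_insert]
  split_ifs
  · exact card_insert_of_notMem (by simp)
  · rfl

lemma sum_playCount (t : ℕ) : ∑ j : Fin K, playCount I j t ω = t := by
  classical
  simpa [playCount] using (card_eq_sum_card_fiberwise (f := fun l => I l ω) (s := Icc 1 t)
    (t := univ) fun _ _ => mem_univ _).symm

lemma exists_playCount_eq_of_lt {s n : ℕ} (h : s < playCount I i n ω) :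
    ∃ t, 1 ≤ t ∧ t ≤ n ∧ I t ω = i ∧ playCount I i (t - 1) ω = s := by
  induction n with
  | zero => simp [playCount] at h
  | succ n ih =>
    by_cases h' : s < playCount I i n ω
    · obtain ⟨t, ht1, htn, hI, hT⟩ := ih h'
      exact ⟨t, ht1, by omega, hI, hT⟩
    · have hstep := playCount_succ I i ω n
      split_ifs at hstep with hI
      · exact ⟨n + 1, by omega, le_rfl, hI, by simp only [Nat.add_sub_cancel]; omega⟩
      · omega

end PlayCount

section Bonus

variable {β ξ α η : ℝ}

/-- The deviation level `z_t` for which the concentration bound `β / z_t ^ ξ` equals `t ^ (-α)`;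
the bonus is `B_{t,s} = z_t / s ^ (1 - η)`. -/
def confLevel (β ξ α : ℝ) (t : ℕ) : ℝ := β ^ (1 / ξ) * (t : ℝ) ^ (α / ξ)

lemma one_le_confLevel (hβ : 1 ≤ β) (hξ : 0 < ξ) (hα : 0 ≤ α) {t : ℕ} (ht : 1 ≤ t) :
    1 ≤ confLevel β ξ α t :=
  one_le_mul_of_one_le_of_one_le (Real.one_le_rpow hβ (by positivity))
    (Real.one_le_rpow (by exact_mod_cast ht) (by positivity))

lemma div_confLevel_rpow (hβ : 0 < β) (hξ : ξ ≠ 0) (t : ℕ) :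
    β / confLevel β ξ α t ^ ξ = (t : ℝ) ^ (-α) := by
  rw [confLevel, Real.mul_rpow (by positivity) (by positivity), ← Real.rpow_mul hβ.le,
    ← Real.rpow_mul (Nat.cast_nonneg t), one_div_mul_cancel hξ, div_mul_cancel₀ _ hξ,
    Real.rpow_one, div_mul_cancel_left₀ hβ.ne', Real.rpow_neg (Nat.cast_nonneg t)]

lemma mul_bonus {s : ℕ} (hs : 0 < s) (t : ℕ) :
    (s : ℝ) * bonus β ξ α η t s = (s : ℝ) ^ η * confLevel β ξ α t := by
  have hs' : (0 : ℝ) < s := by exact_mod_cast hs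
  have hsplit : (s : ℝ) ^ η * (s : ℝ) ^ (1 - η) = s := by
    rw [← Real.rpow_add hs']; norm_num
  have hpos : (s : ℝ) ^ (1 - η) ≠ 0 := (Real.rpow_pos_of_pos hs' _).ne'
  rw [bonus, confLevel]
  nth_rewrite 1 [← hsplit]
  field_simp

lemma bonus_le_bonus (hβ : 0 ≤ β) (hξ : 0 ≤ ξ) (hα : 0 ≤ α) {t t' : ℕ} (htt' : t ≤ t')
    (s : ℕ) : bonus β ξ α η t s ≤ bonus β ξ α η t' s := by
  unfold bonus
  gcongr

lemma two_mul_bonus_le {Δ : ℝ} (hβ : 0 ≤ β) (hη : η < 1) (hΔ : 0 < Δ) {n s : ℕ} (hs : 0 < s)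
    (hA : (2 * β ^ (1 / ξ) / Δ) ^ (1 / (1 - η)) * (n : ℝ) ^ (α / (ξ * (1 - η))) ≤ s) :
    2 * bonus β ξ α η n s ≤ Δ := by
  have h1η : 0 < 1 - η := by linarith
  have hpow : 2 * β ^ (1 / ξ) / Δ * (n : ℝ) ^ (α / ξ) ≤ (s : ℝ) ^ (1 - η) := by
    calc 2 * β ^ (1 / ξ) / Δ * (n : ℝ) ^ (α / ξ)
        = ((2 * β ^ (1 / ξ) / Δ) ^ (1 / (1 - η)) * (n : ℝ) ^ (α / (ξ * (1 - η)))) ^ (1 - η) := by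
          rw [Real.mul_rpow (by positivity) (by positivity), ← Real.rpow_mul (by positivity),
            ← Real.rpow_mul (Nat.cast_nonneg n), one_div_mul_cancel h1η.ne', Real.rpow_one,
            div_mul_eq_div_div, div_mul_cancel₀ _ h1η.ne']
      _ ≤ (s : ℝ) ^ (1 - η) := by gcongr
  rw [bonus, ← mul_div_assoc, div_le_iff₀ (by positivity)]
  rw [div_mul_eq_mul_div, div_le_iff₀ hΔ] at hpow
  linarith

end Bonus

lemma sum_range_rpow_neg_le {α : ℝ} (hα : 1 < α) {m : ℕ} (hm : 0 < m) (N : ℕ) :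
    ∑ k ∈ range N, ((m + 1 + k : ℕ) : ℝ) ^ (-α) ≤ (m : ℝ) ^ (1 - α) / (α - 1) := by
  have hm' : (0 : ℝ) < m := by exact_mod_cast hm
  have hanti : AntitoneOn (fun x : ℝ => x ^ (-α)) (Set.Icc m (m + N)) := fun x hx y _ hxy =>
    Real.rpow_le_rpow_of_nonpos (hm'.trans_le hx.1) hxy (by linarith)
  have hint := hanti.sum_le_integral
  push_cast at hint ⊢
  simp_rw [add_right_comm _ (1 : ℝ), add_assoc] at hint ⊢
  refine hint.trans ?_
  rw [integral_rpow (Or.inr ⟨by linarith, by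
    rw [Set.uIcc_of_le (by linarith [N.cast_nonneg (α := ℝ)])]; exact fun h => hm'.not_ge h.1⟩),
    show -α + 1 = 1 - α by ring, div_le_iff_of_neg (by linarith)]
  have hend : 0 ≤ ((m : ℝ) + N) ^ (1 - α) := Real.rpow_nonneg (by positivity) _
  have hmα : (m : ℝ) ^ (1 - α) / (α - 1) * (1 - α) = -(m : ℝ) ^ (1 - α) := by
    field_simp [(by linarith : α - 1 ≠ 0)]; ring
  linarith

lemma sum_range_ceil_rpow_neg_le {α w : ℝ} (hα : 1 < α) (hw : 0 < w) (N : ℕ) :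
    ∑ k ∈ range N, ((⌈w⌉₊ + 1 + k : ℕ) : ℝ) ^ (-α) ≤ 1 / ((α - 1) * w ^ (α - 1)) :=
  calc _ ≤ (⌈w⌉₊ : ℝ) ^ (1 - α) / (α - 1) :=
        sum_range_rpow_neg_le hα (Nat.ceil_pos.mpr hw) N
    _ ≤ w ^ (1 - α) / (α - 1) := div_le_div_of_nonneg_right
        (Real.rpow_le_rpow_of_nonpos hw (Nat.le_ceil w) (by linarith)) (by linarith)
    _ = 1 / ((α - 1) * w ^ (α - 1)) := by
        rw [show 1 - α = -(α - 1) by ring, Real.rpow_neg hw.le]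
        field_simp

section Deviation

variable {Ω : Type*} [MeasurableSpace Ω] {P : Measure Ω} {Y : Ω → ℝ} {m β ξ α η : ℝ} {s t : ℕ}

lemma bonus_le_iff (hs : 0 < s) (d : ℝ) :
    bonus β ξ α η t s ≤ d ↔ (s : ℝ) ^ η * confLevel β ξ α t ≤ s * d := by
  rw [← mul_bonus hs, mul_le_mul_iff_right₀ (by exact_mod_cast hs)]

lemma measure_bonus_le_sub_le (hβ : 1 ≤ β) (hξ : 0 < ξ) (hα : 0 ≤ α) (hs : 0 < s) (ht : 1 ≤ t)
    (hY : ∀ z : ℝ, 1 ≤ z →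
      P {ω | (s : ℝ) * Y ω - s * m ≥ (s : ℝ) ^ η * z} ≤ ENNReal.ofReal (β / z ^ ξ)) :
    P {ω | bonus β ξ α η t s ≤ Y ω - m} ≤ ENNReal.ofReal ((t : ℝ) ^ (-α)) := by
  rw [← div_confLevel_rpow (β := β) (α := α) (by linarith) hξ.ne']
  refine (measure_mono fun ω hω => ?_).trans (hY _ (one_le_confLevel hβ hξ hα ht))
  have := (bonus_le_iff hs _).mp hω
  rw [Set.mem_ofPred_eq] at *
  linarith

lemma measure_sub_le_neg_bonus_le (hβ : 1 ≤ β) (hξ : 0 < ξ) (hα : 0 ≤ α) (hs : 0 < s)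
    (ht : 1 ≤ t)
    (hY : ∀ z : ℝ, 1 ≤ z →
      P {ω | (s : ℝ) * Y ω - s * m ≤ -((s : ℝ) ^ η * z)} ≤ ENNReal.ofReal (β / z ^ ξ)) :
    P {ω | Y ω - m ≤ -bonus β ξ α η t s} ≤ ENNReal.ofReal ((t : ℝ) ^ (-α)) := by
  rw [← div_confLevel_rpow (β := β) (α := α) (by linarith) hξ.ne']
  refine (measure_mono fun ω hω => ?_).trans (hY _ (one_le_confLevel hβ hξ hα ht))
  have := (bonus_le_iff hs _).mp (le_neg.mp hω)
  rw [Set.mem_ofPred_eq] at *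
  linarith

end Deviation

section Policy

variable {Ω : Type*} {K : ℕ} {X : Fin K → ℕ → Ω → ℝ} {I : ℕ → Ω → Fin K} {β ξ α η : ℝ}

lemma ucbIdx_le_of_ucbIdxE_le {a j : Fin K} {u : ℕ} {ω : Ω} (ha : playCount I a u ω ≠ 0)
    (h : ucbIdxE X β ξ α η I j u ω ≤ ucbIdxE X β ξ α η I a u ω) :
    playCount I j u ω ≠ 0 ∧
      ucbIdx X β ξ α η j (playCount I j u ω) u ω ≤ ucbIdx X β ξ α η a (playCount I a u ω) u ω := by
  rw [ucbIdxE, ucbIdxE, if_neg ha] at h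
  split_ifs at h with hj
  · exact absurd (top_le_iff.mp h) (EReal.coe_ne_top _)
  · exact ⟨hj, EReal.coe_le_coe_iff.mp h⟩

lemma deviation_of_lt_playCount
    (hPolicy : ∀ t : ℕ, 1 ≤ t → ∀ ω : Ω, ∀ j : Fin K,
      ucbIdxE X β ξ α η I j (t - 1) ω ≤ ucbIdxE X β ξ α η I (I t ω) (t - 1) ω)
    (hβ : 0 ≤ β) (hξ : 0 ≤ ξ) (hα : 0 ≤ α) {μ : Fin K → ℝ} {i istar : Fin K} (hi : i ≠ istar)
    {Δ : ℝ} (hΔ : Δ ≤ μ istar - μ i) {n s₀ : ℕ} (hs₀ : 0 < s₀)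
    (hB : 2 * bonus β ξ α η n s₀ ≤ Δ) {ω : Ω} (h : s₀ < playCount I i n ω) :
    bonus β ξ α η s₀ s₀ ≤ empAvg X i s₀ ω - μ i ∨
      ∃ s ∈ Icc 1 n, empAvg X istar s ω - μ istar ≤ -bonus β ξ α η (s₀ + s) s := by
  obtain ⟨t, ht1, htn, hIt, hTi⟩ := exists_playCount_eq_of_lt I i ω h
  set s := playCount I istar (t - 1) ω
  obtain ⟨hs, hidx⟩ :=
    ucbIdx_le_of_ucbIdxE_le (by rw [hIt, hTi]; omega) (hPolicy t ht1 ω istar)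
  rw [hIt, hTi, ucbIdx, ucbIdx] at hidx
  have hplays : s₀ + s ≤ t - 1 := by
    have := sum_le_sum_of_subset (f := fun j => playCount I j (t - 1) ω)
      (subset_univ {i, istar})
    rw [sum_pair hi, sum_playCount, hTi] at this
    exact this
  have hBi : bonus β ξ α η s₀ s₀ ≤ bonus β ξ α η (t - 1) s₀ := bonus_le_bonus hβ hξ hα (by omega) _
  have hBn : bonus β ξ α η (t - 1) s₀ ≤ bonus β ξ α η n s₀ := bonus_le_bonus hβ hξ hα (by omega) _
  have hBs : bonus β ξ α η (s₀ + s) s ≤ bonus β ξ α η (t - 1) s :=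
    bonus_le_bonus hβ hξ hα hplays _
  by_cases hdev : bonus β ξ α η s₀ s₀ ≤ empAvg X i s₀ ω - μ i
  · exact Or.inl hdev
  · refine Or.inr ⟨s, mem_Icc.mpr ⟨Nat.one_le_iff_ne_zero.mpr hs, by omega⟩, ?_⟩
    linarith

end Policy

lemma measure_lt_playCount_le {Ω : Type*} [MeasurableSpace Ω] (P : Measure Ω) {K : ℕ}
    {X : Fin K → ℕ → Ω → ℝ} {I : ℕ → Ω → Fin K} {β ξ α η : ℝ}
    (hPolicy : ∀ t : ℕ, 1 ≤ t → ∀ ω : Ω, ∀ j : Fin K,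
      ucbIdxE X β ξ α η I j (t - 1) ω ≤ ucbIdxE X β ξ α η I (I t ω) (t - 1) ω)
    (hβ : 1 ≤ β) (hξ : 0 < ξ) (hα : 0 ≤ α) {μ : Fin K → ℝ} {i istar : Fin K} (hi : i ≠ istar)
    (hup : ∀ s : ℕ, 1 ≤ s → ∀ z : ℝ, 1 ≤ z →
      P {ω | (s : ℝ) * empAvg X i s ω - s * μ i ≥ (s : ℝ) ^ η * z} ≤ ENNReal.ofReal (β / z ^ ξ))
    (hlow : ∀ s : ℕ, 1 ≤ s → ∀ z : ℝ, 1 ≤ z →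
      P {ω | (s : ℝ) * empAvg X istar s ω - s * μ istar ≤ -((s : ℝ) ^ η * z)}
        ≤ ENNReal.ofReal (β / z ^ ξ))
    {Δ : ℝ} (hΔ : Δ ≤ μ istar - μ i) {n s₀ : ℕ} (hs₀ : 0 < s₀)
    (hB : 2 * bonus β ξ α η n s₀ ≤ Δ) :
    P {ω | s₀ < playCount I i n ω}
      ≤ ENNReal.ofReal (∑ k ∈ range (n + 1), ((s₀ + k : ℕ) : ℝ) ^ (-α)) := by
  have hβ0 : 0 ≤ β := by linarith
  have hsplit : ∑ k ∈ range (n + 1), ((s₀ + k : ℕ) : ℝ) ^ (-α)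
      = (s₀ : ℝ) ^ (-α) + ∑ s ∈ Icc 1 n, ((s₀ + s : ℕ) : ℝ) ^ (-α) := by
    rw [sum_range_succ', add_comm, ← Ico_add_one_right_eq_Icc, sum_Ico_eq_sum_range,
      Nat.add_sub_cancel]
    simp only [Nat.add_zero, add_comm 1]
  calc P {ω | s₀ < playCount I i n ω}
      ≤ P ({ω | bonus β ξ α η s₀ s₀ ≤ empAvg X i s₀ ω - μ i} ∪
          ⋃ s ∈ Icc 1 n, {ω | empAvg X istar s ω - μ istar ≤ -bonus β ξ α η (s₀ + s) s}) :=
        measure_mono fun ω hω => by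
          simpa using deviation_of_lt_playCount hPolicy hβ0 hξ.le hα hi hΔ hs₀ hB hω
    _ ≤ P {ω | bonus β ξ α η s₀ s₀ ≤ empAvg X i s₀ ω - μ i} +
          ∑ s ∈ Icc 1 n,
            P {ω | empAvg X istar s ω - μ istar ≤ -bonus β ξ α η (s₀ + s) s} :=
        (measure_union_le _ _).trans (by gcongr; exact measure_biUnion_finset_le _ _)
    _ ≤ ENNReal.ofReal ((s₀ : ℝ) ^ (-α)) +
          ∑ s ∈ Icc 1 n, ENNReal.ofReal (((s₀ + s : ℕ) : ℝ) ^ (-α)) := by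
        gcongr with s hs
        · exact measure_bonus_le_sub_le hβ hξ hα hs₀ hs₀ (hup s₀ hs₀)
        · have hs1 := (mem_Icc.mp hs).1
          exact measure_sub_le_neg_bonus_le hβ hξ hα hs1 (by omega) (hlow s hs1)
    _ = ENNReal.ofReal (∑ k ∈ range (n + 1), ((s₀ + k : ℕ) : ℝ) ^ (-α)) := by
        rw [hsplit, ENNReal.ofReal_add (by positivity) (by positivity),
          ENNReal.ofReal_sum_of_nonneg fun _ _ => by positivity]

section Reward

variable {Ω : Type*} {K : ℕ} (X : Fin K → ℕ → Ω → ℝ) (I : ℕ → Ω → Fin K) (ω : Ω)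

lemma natCast_mul_empAvg (i : Fin K) (m : ℕ) :
    (m : ℝ) * empAvg X i m ω = ∑ t ∈ Icc 1 m, X i t ω := by
  rcases Nat.eq_zero_or_pos m with rfl | hm
  · simp
  · exact mul_div_cancel₀ _ (by positivity)

/-- Both sides contain the first `T_istar(n)` rewards of `istar`; the remaining terms number
`∑_{j ≠ istar} T_j(n)` on each side. -/
lemma abs_mul_rewardAvg_sub_le {R : ℝ} (hX : ∀ i t, |X i t ω| ≤ R) (istar : Fin K) {n : ℕ}
    (hn : 0 < n) :
    |(n : ℝ) * rewardAvg X I n ω - n * empAvg X istar n ω|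
      ≤ 2 * R * ∑ j ∈ univ.erase istar, (playCount I j n ω : ℝ) := by
  set T := fun j => playCount I j n ω
  have hTn : T istar + ∑ j ∈ univ.erase istar, T j = n := by
    rw [add_sum_erase _ _ (mem_univ _)]; exact sum_playCount I ω n
  have hsum_le : ∀ (j : Fin K) (s : Finset ℕ), |∑ t ∈ s, X j t ω| ≤ s.card * R := fun j s =>
    (abs_sum_le_sum_abs _ _).trans ((sum_le_card_nsmul _ _ _ fun t _ => hX j t).trans_eq
      (nsmul_eq_mul _ _))
  have hreward : (n : ℝ) * rewardAvg X I n ω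
      = ∑ t ∈ Icc 1 (T istar), X istar t ω
        + ∑ j ∈ univ.erase istar, ∑ t ∈ Icc 1 (T j), X j t ω := by
    rw [rewardAvg, mul_div_cancel₀ _ (by positivity), ← add_sum_erase _ _ (mem_univ istar)]
    exact congrArg₂ (· + ·) (natCast_mul_empAvg X ω istar _)
      (sum_congr rfl fun j _ => natCast_mul_empAvg X ω j _)
  have hopt : (n : ℝ) * empAvg X istar n ω
      = ∑ t ∈ Icc 1 (T istar), X istar t ω + ∑ t ∈ Ioc (T istar) n, X istar t ω := by
    rw [natCast_mul_empAvg, show Icc 1 n = Ioc 0 n from Icc_add_one_left_eq_Ioc 0 n,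
      show Icc 1 (T istar) = Ioc 0 (T istar) from Icc_add_one_left_eq_Ioc 0 _]
    exact (sum_Ioc_consecutive _ (Nat.zero_le _) (by omega)).symm
  have hothers : |∑ j ∈ univ.erase istar, ∑ t ∈ Icc 1 (T j), X j t ω|
      ≤ R * ∑ j ∈ univ.erase istar, (T j : ℝ) := by
    rw [mul_sum]
    refine (abs_sum_le_sum_abs _ _).trans (sum_le_sum fun j _ => ?_)
    simpa [mul_comm] using hsum_le j (Icc 1 (T j))
  have htail : |∑ t ∈ Ioc (T istar) n, X istar t ω| ≤ R * ∑ j ∈ univ.erase istar, (T j : ℝ) := by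
    have hcard : #(Ioc (T istar) n) = ∑ j ∈ univ.erase istar, T j := by
      rw [Nat.card_Ioc]; omega
    have := hsum_le istar (Ioc (T istar) n)
    rw [hcard] at this
    push_cast at this
    linarith
  rw [hreward, hopt, add_sub_add_left_eq_sub]
  linarith [abs_sub (∑ j ∈ univ.erase istar, ∑ t ∈ Icc 1 (T j), X j t ω)
    (∑ t ∈ Ioc (T istar) n, X istar t ω)]

end Reward

lemma abs_mul_rewardAvg_sub_le_of_playCount_le {Ω : Type*} {K : ℕ} (X : Fin K → ℕ → Ω → ℝ)
    (I : ℕ → Ω → Fin K) (ω : Ω) {R c : ℝ} (hX : ∀ i t, |X i t ω| ≤ R) (istar : Fin K) {n : ℕ}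
    (hn : 0 < n) (hT : ∀ j ∈ univ.erase istar, (playCount I j n ω : ℝ) ≤ c) :
    |(n : ℝ) * rewardAvg X I n ω - n * empAvg X istar n ω| ≤ 2 * R * ((K : ℝ) - 1) * c := by
  have hR : 0 ≤ 2 * R := by linarith [(abs_nonneg _).trans (hX istar 0)]
  have hcard : (#(univ.erase istar) : ℝ) = K - 1 := by
    rw [card_erase_of_mem (mem_univ _), card_univ, Fintype.card_fin, Nat.cast_pred istar.pos]
  calc _ ≤ 2 * R * ∑ j ∈ univ.erase istar, (playCount I j n ω : ℝ) :=
        abs_mul_rewardAvg_sub_le X I ω hX istar hn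
    _ ≤ 2 * R * (#(univ.erase istar) * c) := by
        gcongr
        exact (sum_le_card_nsmul _ _ _ hT).trans_eq (nsmul_eq_mul _ _)
    _ = 2 * R * ((K : ℝ) - 1) * c := by rw [hcard]; ring

section Transfer

variable {Ω : Type*} [MeasurableSpace Ω] (P : Measure Ω) {f g : Ω → ℝ} {B : Set Ω} {r c r' : ℝ}

lemma measure_ge_le_add_of_abs_sub_le (hfg : ∀ ω ∉ B, |f ω - g ω| ≤ c) (hr : r + c ≤ r') :
    P {ω | f ω ≥ r'} ≤ P {ω | g ω ≥ r} + P B := by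
  refine (measure_mono fun ω (hω : f ω ≥ r') => ?_).trans (measure_union_le _ _)
  by_cases hB : ω ∈ B
  · exact Or.inr hB
  · exact Or.inl (show g ω ≥ r by linarith [(abs_le.mp (hfg ω hB)).2])

lemma measure_le_neg_le_add_of_abs_sub_le (hfg : ∀ ω ∉ B, |f ω - g ω| ≤ c) (hr : r + c ≤ r') :
    P {ω | f ω ≤ -r'} ≤ P {ω | g ω ≤ -r} + P B := by
  refine (measure_mono fun ω (hω : f ω ≤ -r') => ?_).trans (measure_union_le _ _)
  by_cases hB : ω ∈ B
  · exact Or.inr hB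
  · exact Or.inl (show g ω ≤ -r by linarith [(abs_le.mp (hfg ω hB)).1])

lemma measure_biUnion_le_card_mul {ι : Type*} (s : Finset ι) {E : ι → Set Ω} {p : ℝ}
    (h : ∀ i ∈ s, P (E i) ≤ ENNReal.ofReal p) :
    P (⋃ i ∈ s, E i) ≤ ENNReal.ofReal (#s * p) := by
  refine (measure_biUnion_finset_le _ _).trans ((sum_le_card_nsmul _ _ _ h).trans_eq ?_)
  rw [nsmul_eq_mul, ENNReal.ofReal_mul (Nat.cast_nonneg _), ENNReal.ofReal_natCast]

end Transfer

lemma measure_rewardAvg_tail_le {Ω : Type*} [MeasurableSpace Ω] (P : Measure Ω) {K : ℕ}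
    {X : Fin K → ℕ → Ω → ℝ} {I : ℕ → Ω → Fin K} {R β ξ α η : ℝ}
    (hX : ∀ i t ω, |X i t ω| ≤ R) {μ : Fin K → ℝ}
    (hconc : ∀ i : Fin K, ∀ n : ℕ, 1 ≤ n → ∀ z : ℝ, 1 ≤ z →
      P {ω | (n : ℝ) * empAvg X i n ω - n * μ i ≥ (n : ℝ) ^ η * z}
        ≤ ENNReal.ofReal (β / z ^ ξ) ∧
      P {ω | (n : ℝ) * empAvg X i n ω - n * μ i ≤ -((n : ℝ) ^ η * z)}
        ≤ ENNReal.ofReal (β / z ^ ξ))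
    {istar : Fin K}
    (hPolicy : ∀ t : ℕ, 1 ≤ t → ∀ ω : Ω, ∀ j : Fin K,
      ucbIdxE X β ξ α η I j (t - 1) ω ≤ ucbIdxE X β ξ α η I (I t ω) (t - 1) ω)
    (hβ : 1 ≤ β) (hξ : 0 < ξ) (hα : 0 ≤ α) {Δ : ℝ} (hΔ : ∀ j, j ≠ istar → Δ ≤ μ istar - μ j)
    {n s₀ : ℕ} (hn : 0 < n) (hs₀ : 0 < s₀) (hB : 2 * bonus β ξ α η n s₀ ≤ Δ) {p c x r : ℝ}
    (hp : ∑ k ∈ range (n + 1), ((s₀ + k : ℕ) : ℝ) ^ (-α) ≤ p) (hc : (s₀ : ℝ) ≤ c)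
    (hx : 1 ≤ x) (hr : (n : ℝ) ^ η * x + 2 * R * ((K : ℝ) - 1) * c ≤ r) :
    P {ω | (n : ℝ) * rewardAvg X I n ω - n * μ istar ≥ r}
      ≤ ENNReal.ofReal (β / x ^ ξ + ((K : ℝ) - 1) * p) ∧
    P {ω | (n : ℝ) * rewardAvg X I n ω - n * μ istar ≤ -r}
      ≤ ENNReal.ofReal (β / x ^ ξ + ((K : ℝ) - 1) * p) := by
  set B := ⋃ i ∈ univ.erase istar, {ω | s₀ < playCount I i n ω}
  have hbad : P B ≤ ENNReal.ofReal (((K : ℝ) - 1) * p) := by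
    have := measure_biUnion_le_card_mul P (univ.erase istar) fun i hi =>
      (measure_lt_playCount_le P hPolicy hβ hξ hα (ne_of_mem_erase hi)
        (fun s hs z hz => (hconc i s hs z hz).1) (fun s hs z hz => (hconc istar s hs z hz).2)
        (hΔ i (ne_of_mem_erase hi)) hs₀ hB).trans (ENNReal.ofReal_le_ofReal hp)
    rwa [card_erase_of_mem (mem_univ _), card_univ, Fintype.card_fin,
      Nat.cast_pred istar.pos] at this
  have hclose : ∀ ω ∉ B, |((n : ℝ) * rewardAvg X I n ω - n * μ istar)
      - ((n : ℝ) * empAvg X istar n ω - n * μ istar)| ≤ 2 * R * ((K : ℝ) - 1) * c := by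
    intro ω hω
    rw [sub_sub_sub_cancel_right]
    refine abs_mul_rewardAvg_sub_le_of_playCount_le X I ω (fun i t => hX i t ω) istar hn
      fun j hj => ?_
    exact (Nat.cast_le.mpr (not_lt.mp fun h => hω (Set.mem_biUnion hj h))).trans hc
  have hK : (0 : ℝ) ≤ K - 1 := by
    have : (1 : ℝ) ≤ K := by exact_mod_cast istar.pos
    linarith
  have hsum : ENNReal.ofReal (β / x ^ ξ) + ENNReal.ofReal (((K : ℝ) - 1) * p)
      = ENNReal.ofReal (β / x ^ ξ + ((K : ℝ) - 1) * p) :=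
    (ENNReal.ofReal_add (by positivity)
      (mul_nonneg hK ((sum_nonneg fun _ _ => by positivity).trans hp))).symm
  exact ⟨(measure_ge_le_add_of_abs_sub_le P hclose hr).trans
      ((add_le_add (hconc istar n hn x hx).1 hbad).trans_eq hsum),
    (measure_le_neg_le_add_of_abs_sub_le P hclose hr).trans
      ((add_le_add (hconc istar n hn x hx).2 hbad).trans_eq hsum)⟩

theorem ucb_reward_concentration_general
    {Ω : Type*} [MeasurableSpace Ω] (P : Measure Ω)
    (K : ℕ) (R : ℝ)
    (X : Fin K → ℕ → Ω → ℝ)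
    (hXbdd : ∀ i t ω, |X i t ω| ≤ R)
    (μ : Fin K → ℝ)
    (β ξ η α : ℝ) (hβ : 1 < β) (hξ : 0 < ξ) (hη' : η < 1)
    (hα2 : 2 < α)
    (hconc : ∀ i : Fin K, ∀ n : ℕ, 1 ≤ n → ∀ z : ℝ, 1 ≤ z →
      P {ω | (n : ℝ) * empAvg X i n ω - n * μ i ≥ (n : ℝ) ^ η * z}
        ≤ ENNReal.ofReal (β / z ^ ξ) ∧
      P {ω | (n : ℝ) * empAvg X i n ω - n * μ i ≤ -((n : ℝ) ^ η * z)}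
        ≤ ENNReal.ofReal (β / z ^ ξ))
    (istar : Fin K)
    (I : ℕ → Ω → Fin K)
    (hPolicy : ∀ t : ℕ, 1 ≤ t → ∀ ω : Ω, ∀ j : Fin K,
      ucbIdxE X β ξ α η I j (t - 1) ω ≤ ucbIdxE X β ξ α η I (I t ω) (t - 1) ω)
    (Δmin : ℝ)
    (hΔmin_le : ∀ j, j ≠ istar → Δmin ≤ μ istar - μ j)
    (hΔβ : 1 < 2 * β ^ (1 / ξ) / Δmin)
    (A : ℕ → ℕ)
    (hA : ∀ n : ℕ,
      A n = ⌈(2 * β ^ (1 / ξ) / Δmin) ^ (1 / (1 - η)) * (n : ℝ) ^ (α / (ξ * (1 - η)))⌉₊)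
    (Np : ℕ)
    (hNp : 1 ≤ Np ∧ A Np ≤ Np ∧ ∀ t : ℕ, 1 ≤ t → A t ≤ t → Np ≤ t)
    (n : ℕ) (hn : Np ≤ n) (x : ℝ) (hx : 1 ≤ x) :
    P {ω | (n : ℝ) * rewardAvg X I n ω - n * μ istar
        ≥ ((n : ℝ) ^ η + 2 * R * ((K : ℝ) - 1) * (3 + (A n : ℝ))) * x}
      ≤ ENNReal.ofReal (β / x ^ ξ
          + 2 * ((K : ℝ) - 1) / ((α - 1) * ((1 + (A n : ℝ)) * x) ^ (α - 1))) ∧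
    P {ω | (n : ℝ) * rewardAvg X I n ω - n * μ istar
        ≤ -(((n : ℝ) ^ η + 2 * R * ((K : ℝ) - 1) * (3 + (A n : ℝ))) * x)}
      ≤ ENNReal.ofReal (β / x ^ ξ
          + 2 * ((K : ℝ) - 1) / ((α - 1) * ((1 + (A n : ℝ)) * x) ^ (α - 1))) := by
  have hΔ : 0 < Δmin := by
    by_contra! h
    linarith [div_nonpos_of_nonneg_of_nonpos (by positivity : 0 ≤ 2 * β ^ (1 / ξ)) h]
  set w := (1 + (A n : ℝ)) * x
  obtain ⟨hAw, hw⟩ : (A n : ℝ) ≤ w ∧ 0 < w := by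
    constructor <;> nlinarith [(A n).cast_nonneg (α := ℝ)]
  have hceil := Nat.ceil_lt_add_one hw.le
  have hthreshold : (2 * β ^ (1 / ξ) / Δmin) ^ (1 / (1 - η)) * (n : ℝ) ^ (α / (ξ * (1 - η)))
      ≤ ((⌈w⌉₊ + 1 : ℕ) : ℝ) := by
    have := Nat.le_ceil ((2 * β ^ (1 / ξ) / Δmin) ^ (1 / (1 - η)) * (n : ℝ) ^ (α / (ξ * (1 - η))))
    rw [← hA n] at this
    push_cast
    linarith [Nat.le_ceil w]
  have hsum : ∑ k ∈ range (n + 1), ((⌈w⌉₊ + 1 + k : ℕ) : ℝ) ^ (-α)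
      ≤ 2 / ((α - 1) * w ^ (α - 1)) :=
    (sum_range_ceil_rpow_neg_le (by linarith) hw _).trans (div_le_div_of_nonneg_right
      (by norm_num) (mul_pos (by linarith) (Real.rpow_pos_of_pos hw _)).le)
  rw [show 2 * ((K : ℝ) - 1) / ((α - 1) * w ^ (α - 1))
    = ((K : ℝ) - 1) * (2 / ((α - 1) * w ^ (α - 1))) by ring]
  exact measure_rewardAvg_tail_le P hXbdd hconc hPolicy hβ.le hξ (by linarith) hΔmin_le
    (hNp.1.trans hn) (Nat.succ_pos _) (two_mul_bonus_le (by linarith) hη' hΔ (Nat.succ_pos _)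
    hthreshold) hsum (c := (3 + (A n : ℝ)) * x) (by push_cast; nlinarith) hx (le_of_eq (by ring))

/-- Lemma 3: polynomial concentration of the collected reward under the UCB policy. -/
theorem ucb_reward_concentration
    {Ω : Type*} [MeasurableSpace Ω] (P : Measure Ω) [IsProbabilityMeasure P]
    (K : ℕ) (hK : 2 ≤ K) (R : ℝ) (hR : 0 < R)
    (X : Fin K → ℕ → Ω → ℝ)
    (hXmeas : ∀ i t, Measurable (X i t))
    (hXbdd : ∀ i t ω, |X i t ω| ≤ R)
    (μ : Fin K → ℝ)
    (hconv : ∀ i, Filter.Tendsto (fun n => ∫ ω, empAvg X i n ω ∂P)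
      Filter.atTop (nhds (μ i)))
    (β ξ η α : ℝ) (hβ : 1 < β) (hξ : 0 < ξ) (hη : 1 / 2 ≤ η) (hη' : η < 1)
    (hα2 : 2 < α) (hαlow : ξ * η * (1 - η) ≤ α) (hαhigh : α < ξ * (1 - η))
    (hconc : ∀ i : Fin K, ∀ n : ℕ, 1 ≤ n → ∀ z : ℝ, 1 ≤ z →
      P {ω | (n : ℝ) * empAvg X i n ω - n * μ i ≥ (n : ℝ) ^ η * z}
        ≤ ENNReal.ofReal (β / z ^ ξ) ∧
      P {ω | (n : ℝ) * empAvg X i n ω - n * μ i ≤ -((n : ℝ) ^ η * z)}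
        ≤ ENNReal.ofReal (β / z ^ ξ))
    (istar : Fin K) (hopt : ∀ j, j ≠ istar → μ j < μ istar)
    (I : ℕ → Ω → Fin K)
    (hImeas : ∀ t, Measurable (I t))
    (hPolicy : ∀ t : ℕ, 1 ≤ t → ∀ ω : Ω, ∀ j : Fin K,
      ucbIdxE X β ξ α η I j (t - 1) ω ≤ ucbIdxE X β ξ α η I (I t ω) (t - 1) ω)
    (Δmin : ℝ)
    (hΔmin_le : ∀ j, j ≠ istar → Δmin ≤ μ istar - μ j)
    (hΔmin_ex : ∃ j, j ≠ istar ∧ Δmin = μ istar - μ j)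
    (hΔβ : 1 < 2 * β ^ (1 / ξ) / Δmin)
    (A : ℕ → ℕ)
    (hA : ∀ n : ℕ,
      A n = ⌈(2 * β ^ (1 / ξ) / Δmin) ^ (1 / (1 - η)) * (n : ℝ) ^ (α / (ξ * (1 - η)))⌉₊)
    (Np : ℕ)
    (hNp : 1 ≤ Np ∧ A Np ≤ Np ∧ ∀ t : ℕ, 1 ≤ t → A t ≤ t → Np ≤ t)
    (n : ℕ) (hn : Np ≤ n) (x : ℝ) (hx : 1 ≤ x) :
    P {ω | (n : ℝ) * rewardAvg X I n ω - n * μ istar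
        ≥ ((n : ℝ) ^ η + 2 * R * ((K : ℝ) - 1) * (3 + (A n : ℝ))) * x}
      ≤ ENNReal.ofReal (β / x ^ ξ
          + 2 * ((K : ℝ) - 1) / ((α - 1) * ((1 + (A n : ℝ)) * x) ^ (α - 1))) ∧
    P {ω | (n : ℝ) * rewardAvg X I n ω - n * μ istar
        ≤ -(((n : ℝ) ^ η + 2 * R * ((K : ℝ) - 1) * (3 + (A n : ℝ))) * x)}
      ≤ ENNReal.ofReal (β / x ^ ξ
          + 2 * ((K : ℝ) - 1) / ((α - 1) * ((1 + (A n : ℝ)) * x) ^ (α - 1))) :=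
  ucb_reward_concentration_general P K R X hXbdd μ β ξ η α hβ hξ hη' hα2 hconc istar I hPolicy Δmin
    hΔmin_le hΔβ A hA Np hNp n hn x hx
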